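/- Let t₀ < T be real numbers and let u : [t₀,T] × ℝ → ℝ be a continuous bounded function. Let A be a nonempty index set and let (x_α)_{α∈A} be a family of differentiable functions x_α : [t₀,T] → ℝ satisfying x_α'(t) = u(t, x_α(t)) for all t ∈ [t₀,T], and suppose the set {x_α(t₀) : α ∈ A} is bounded. Then the function y(t) := sup_{α∈A} x_α(t) is real-valued and differentiable with y'(t) = u(t, y(t)) for all t ∈ [t₀,T], and similarly z(t) := inf_{α∈A} x_α(t) is real-valued and differentiable with z'(t) = u(t, z(t)) for all t ∈ [t₀,T]. -/

import Mathlib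

open Set Filter Topology

/-!
Solutions are `M`-Lipschitz, so boundedness of the family at `t₀` propagates to all of
`[t₀, T]`. Fix `t` and let `c = sup_α x_α(t)`. By continuity of `u` at `(t, c)`, every solution
starting within `δ` of `c` at time `t` follows the line of slope `u(t, c)` up to `ε |s - t|` for
`s` near `t`; solutions starting below `c - δ` cannot climb to that line in so short a time, and
some solution starts arbitrarily close to `c`. So the supremum has derivative `u(t, c)`.
The infimum is minus the supremum of solutions of the reflected equation `x' = -u(t, -x)`.
-/
def IsSolutionOn (u : ℝ → ℝ → ℝ) (I : Set ℝ) (f : ℝ → ℝ) : Prop :=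
  ∀ t ∈ I, HasDerivWithinAt f (u t (f t)) I t

-- No boundedness needed: for unbounded families both sides are the junk value `0`.
lemma Real.iInf_eq_neg_iSup_neg {A : Type*} (f : A → ℝ) : ⨅ α, f α = -⨆ α, -f α := by
  rw [iSup, ← Real.sInf_neg, iInf]
  congr 1
  ext
  simp [neg_eq_iff_eq_neg]

lemma eventually_mul_abs_sub_lt (t K : ℝ) {δ : ℝ} (hδ : 0 < δ) :
    ∀ᶠ s in 𝓝 t, K * |s - t| < δ := by
  have h : Tendsto (fun s => K * |s - t|) (𝓝 t) (𝓝 (K * |t - t|)) :=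
    ((continuous_id.sub continuous_const).abs.const_mul K).tendsto t
  rw [sub_self, abs_zero, mul_zero] at h
  exact h.eventually (gt_mem_nhds hδ)

lemma abs_sub_sub_mul_le_of_hasDerivWithinAt {f f' : ℝ → ℝ} {J : Set ℝ} {L C s t : ℝ}
    (hJ : Convex ℝ J) (hf : ∀ r ∈ J, HasDerivWithinAt f (f' r) J r)
    (hf' : ∀ r ∈ J, |f' r - L| ≤ C) (hs : s ∈ J) (ht : t ∈ J) :
    |f s - f t - (s - t) * L| ≤ C * |s - t| := by
  have hg : ∀ r ∈ J, HasDerivWithinAt (fun r => f r - r * L) (f' r - L) J r := fun r hr =>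
    (hf r hr).sub ((hasDerivWithinAt_id r J).mul_const L |>.congr_deriv (one_mul L))
  have := hJ.norm_image_sub_le_of_norm_hasDerivWithin_le hg hf' ht hs
  rwa [Real.norm_eq_abs, Real.norm_eq_abs,
    show f s - s * L - (f t - t * L) = f s - f t - (s - t) * L by ring] at this

lemma hasDerivWithinAt_iSup_of_eventually {A : Type*} [Nonempty A] {f : A → ℝ → ℝ}
    {S : Set ℝ} {t L M : ℝ} (hbdd : ∀ s ∈ S, BddAbove (range fun α => f α s))
    (hlip : ∀ α, ∀ s ∈ S, |f α s - f α t| ≤ M * |s - t|)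
    (hnear : ∀ ε > 0, ∃ δ > 0, ∀ᶠ s in 𝓝[S] t, ∀ α, (⨆ β, f β t) - δ ≤ f α t →
      |f α s - f α t - (s - t) * L| ≤ ε * |s - t|) (ht : t ∈ S) :
    HasDerivWithinAt (fun s => ⨆ α, f α s) L S t := by
  rw [hasDerivWithinAt_iff_isLittleO, Asymptotics.isLittleO_iff]
  intro ε hε
  obtain ⟨δ, hδ, hnearδ⟩ := hnear (ε / 2) (half_pos hε)
  filter_upwards [hnearδ, nhdsWithin_le_nhds (eventually_mul_abs_sub_lt t (|M| + |L| + ε) hδ),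
    self_mem_nhdsWithin] with s hs hsδ hsS
  set c := ⨆ β, f β t
  have hεs : 0 ≤ ε * |s - t| := by positivity
  have hεδ : ε * |s - t| < δ := by
    have : 0 ≤ (|M| + |L|) * |s - t| := by positivity
    linarith
  have hM : M * |s - t| ≤ |M| * |s - t| := by gcongr; exact le_abs_self M
  have hL : -(|L| * |s - t|) ≤ (s - t) * L := by
    rw [mul_comm |L|, ← abs_mul]; exact neg_abs_le _
  have hupper : ⨆ α, f α s ≤ c + (s - t) * L + ε * |s - t| := by
    refine ciSup_le fun α => ?_
    have hαs := abs_le.mp (hlip α s hsS)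
    by_cases hα : c - δ ≤ f α t
    · have := abs_le.mp (hs α hα)
      linarith [le_ciSup (hbdd t ht) α]
    · linarith
  have hlower : c + (s - t) * L - ε * |s - t| ≤ ⨆ α, f α s := by
    rcases eq_or_ne s t with rfl | hne
    · simp [c]
    have hpos : 0 < ε / 2 * |s - t| := by
      have := abs_pos.mpr (sub_ne_zero.mpr hne); positivity
    obtain ⟨α, hα⟩ := exists_lt_of_lt_ciSup (sub_lt_self c hpos)
    have := abs_le.mp (hs α (by linarith))
    linarith [le_ciSup (hbdd s hsS) α]
  rw [Real.norm_eq_abs, Real.norm_eq_abs, smul_eq_mul, abs_le]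
  constructor <;> linarith

section
variable {u : ℝ → ℝ → ℝ} {I : Set ℝ}

lemma IsSolutionOn.neg {f : ℝ → ℝ} (hf : IsSolutionOn u I f) :
    IsSolutionOn (fun r ξ => -u r (-ξ)) I (-f) :=
  fun t ht => by simpa using (hf t ht).neg

variable [hI : I.OrdConnected] {M : ℝ}

lemma IsSolutionOn.abs_sub_le {f : ℝ → ℝ} (hf : IsSolutionOn u I f)
    (hM : ∀ r ∈ I, ∀ ξ, |u r ξ| ≤ M) {s r : ℝ} (hs : s ∈ I) (hr : r ∈ I) :
    |f s - f r| ≤ M * |s - r| := by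
  simpa only [Real.norm_eq_abs] using hI.convex.norm_image_sub_le_of_norm_hasDerivWithin_le
    hf (fun r hr => (Real.norm_eq_abs _).trans_le (hM r hr _)) hr hs

lemma exists_eventually_abs_sub_sub_mul_le_of_isSolutionOn {t c ε : ℝ}
    (hu : ContinuousWithinAt (fun p : ℝ × ℝ => u p.1 p.2) (I ×ˢ univ) (t, c))
    (hM : ∀ r ∈ I, ∀ ξ, |u r ξ| ≤ M) (ht : t ∈ I) (hε : 0 < ε) :
    ∃ δ > 0, ∀ᶠ s in 𝓝[I] t, ∀ f : ℝ → ℝ, IsSolutionOn u I f → |f t - c| ≤ δ →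
      |f s - f t - (s - t) * u t c| ≤ ε * |s - t| := by
  obtain ⟨ρ, hρ, hρu⟩ := Metric.continuousWithinAt_iff.mp hu ε hε
  have hM0 : 0 ≤ M := (abs_nonneg _).trans (hM t ht 0)
  refine ⟨ρ / 2, half_pos hρ, ?_⟩
  filter_upwards [nhdsWithin_le_nhds (eventually_mul_abs_sub_lt t 1 hρ),
    nhdsWithin_le_nhds (eventually_mul_abs_sub_lt t (2 * M) hρ), self_mem_nhdsWithin]
    with s hsρ hsM hs f hf hft
  have hJ : uIcc t s ⊆ I := hI.uIcc_subset ht hs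
  refine abs_sub_sub_mul_le_of_hasDerivWithinAt (convex_uIcc t s)
    (fun r hr => (hf r (hJ hr)).mono hJ) (fun r hr => ?_) right_mem_uIcc left_mem_uIcc
  have hrt : |r - t| ≤ |s - t| := abs_sub_left_of_mem_uIcc hr
  have hfr : |f r - f t| ≤ M * |r - t| := hf.abs_sub_le hM (hJ hr) ht
  have hdist : dist (r, f r) (t, c) < ρ := by
    rw [Prod.dist_eq, Real.dist_eq, Real.dist_eq, max_lt_iff]
    constructor
    · linarith
    · calc |f r - c| ≤ |f r - f t| + |f t - c| := abs_sub_le _ _ _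
        _ < ρ := by nlinarith
  simpa only [Real.dist_eq] using (hρu ⟨hJ hr, mem_univ _⟩ hdist).le

lemma IsSolutionOn.bddAbove_range {A : Type*} {x : A → ℝ → ℝ} (hx : ∀ α, IsSolutionOn u I (x α))
    (hM : ∀ r ∈ I, ∀ ξ, |u r ξ| ≤ M) {r s : ℝ} (hr : r ∈ I) (hs : s ∈ I)
    (hbdd : BddAbove (range fun α => x α r)) : BddAbove (range fun α => x α s) := by
  obtain ⟨B, hB⟩ := hbdd
  refine ⟨B + M * |s - r|, forall_mem_range.mpr fun α => ?_⟩
  linarith [(abs_le.mp ((hx α).abs_sub_le hM hs hr)).2, hB (mem_range_self α)]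

lemma IsSolutionOn.bddBelow_range {A : Type*} {x : A → ℝ → ℝ} (hx : ∀ α, IsSolutionOn u I (x α))
    (hM : ∀ r ∈ I, ∀ ξ, |u r ξ| ≤ M) {r s : ℝ} (hr : r ∈ I) (hs : s ∈ I)
    (hbdd : BddBelow (range fun α => x α r)) : BddBelow (range fun α => x α s) := by
  obtain ⟨B, hB⟩ := hbdd
  refine ⟨B - M * |s - r|, forall_mem_range.mpr fun α => ?_⟩
  linarith [(abs_le.mp ((hx α).abs_sub_le hM hs hr)).1, hB (mem_range_self α)]

lemma isSolutionOn_iSup {A : Type*} [Nonempty A] {x : A → ℝ → ℝ}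
    (hx : ∀ α, IsSolutionOn u I (x α))
    (hu : ContinuousOn (fun p : ℝ × ℝ => u p.1 p.2) (I ×ˢ univ))
    (hM : ∀ r ∈ I, ∀ ξ, |u r ξ| ≤ M) (hbdd : ∀ s ∈ I, BddAbove (range fun α => x α s)) :
    IsSolutionOn u I (fun s => ⨆ α, x α s) := by
  intro t ht
  refine hasDerivWithinAt_iSup_of_eventually hbdd (fun α s hs => (hx α).abs_sub_le hM hs ht)
    (fun ε hε => ?_) ht
  obtain ⟨δ, hδ, hnear⟩ := exists_eventually_abs_sub_sub_mul_le_of_isSolutionOn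
    (hu (t, ⨆ α, x α t) ⟨ht, mem_univ _⟩) hM ht hε
  refine ⟨δ, hδ, hnear.mono fun s hs α hα => hs (x α) (hx α) ?_⟩
  rw [abs_le]
  constructor <;> linarith [le_ciSup (hbdd t ht) α]

lemma isSolutionOn_iInf {A : Type*} [Nonempty A] {x : A → ℝ → ℝ}
    (hx : ∀ α, IsSolutionOn u I (x α))
    (hu : ContinuousOn (fun p : ℝ × ℝ => u p.1 p.2) (I ×ˢ univ))
    (hM : ∀ r ∈ I, ∀ ξ, |u r ξ| ≤ M) (hbdd : ∀ s ∈ I, BddBelow (range fun α => x α s)) :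
    IsSolutionOn u I (fun s => ⨅ α, x α s) := by
  have hu' : ContinuousOn (fun p : ℝ × ℝ => -u p.1 (-p.2)) (I ×ˢ univ) :=
    (hu.comp (continuous_fst.prodMk continuous_snd.neg).continuousOn
      fun p hp => ⟨hp.1, mem_univ _⟩).neg
  have hM' : ∀ r ∈ I, ∀ ξ, |-u r (-ξ)| ≤ M := fun r hr ξ => by simpa using hM r hr (-ξ)
  have hbdd' : ∀ s ∈ I, BddAbove (range fun α => (-x α) s) := fun s hs => by
    obtain ⟨B, hB⟩ := hbdd s hs
    exact ⟨-B, forall_mem_range.mpr fun α => neg_le_neg (hB (mem_range_self α))⟩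
  have h := (isSolutionOn_iSup (fun α => (hx α).neg) hu' hM' hbdd').neg
  simp only [neg_neg] at h
  convert h using 1
  funext s
  exact Real.iInf_eq_neg_iSup_neg _

end

/-- for a continuous bounded `u : [t₀,T] × ℝ → ℝ` and a nonempty family of
solutions `x_α` of `x' = u(t,x)` on `[t₀,T]` whose values at `t₀` form a bounded set, the
pointwise supremum `y(t) = ⨆ α, x_α(t)` is real-valued (i.e. the sets `{x_α(t) : α}`
remain bounded) and solves `y' = u(t,y)` on `[t₀,T]` (one-sided derivatives at the
endpoints), and likewise for the pointwise infimum. -/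
theorem stmt0 (t₀ T : ℝ) (hT : t₀ < T) (u : ℝ → ℝ → ℝ)
    (hu_cont : ContinuousOn (fun p : ℝ × ℝ => u p.1 p.2) (Set.Icc t₀ T ×ˢ Set.univ))
    (hu_bdd : ∃ M : ℝ, ∀ t ∈ Set.Icc t₀ T, ∀ x : ℝ, |u t x| ≤ M)
    (A : Type*) (hA : Nonempty A) (x : A → ℝ → ℝ)
    (hx : ∀ α : A, ∀ t ∈ Set.Icc t₀ T,
      HasDerivWithinAt (x α) (u t (x α t)) (Set.Icc t₀ T) t)
    (hbddA : BddAbove (Set.range fun α => x α t₀))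
    (hbddB : BddBelow (Set.range fun α => x α t₀)) :
    (∀ t ∈ Set.Icc t₀ T,
      BddAbove (Set.range fun α => x α t) ∧ BddBelow (Set.range fun α => x α t)) ∧
    (∀ t ∈ Set.Icc t₀ T,
      HasDerivWithinAt (fun s => ⨆ α, x α s) (u t (⨆ α, x α t)) (Set.Icc t₀ T) t) ∧
    (∀ t ∈ Set.Icc t₀ T,
      HasDerivWithinAt (fun s => ⨅ α, x α s) (u t (⨅ α, x α t)) (Set.Icc t₀ T) t) := by
  obtain ⟨M, hM⟩ := hu_bdd
  have ht₀ : t₀ ∈ Icc t₀ T := left_mem_Icc.mpr hT.le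
  have hbddAbove : ∀ t ∈ Icc t₀ T, BddAbove (range fun α => x α t) :=
    fun t ht => IsSolutionOn.bddAbove_range hx hM ht₀ ht hbddA
  have hbddBelow : ∀ t ∈ Icc t₀ T, BddBelow (range fun α => x α t) :=
    fun t ht => IsSolutionOn.bddBelow_range hx hM ht₀ ht hbddB
  exact ⟨fun t ht => ⟨hbddAbove t ht, hbddBelow t ht⟩,
    isSolutionOn_iSup hx hu_cont hM hbddAbove, isSolutionOn_iInf hx hu_cont hM hbddBelow⟩
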